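/- arXiv:1605.00824 — 4 statements merged into one kernel-verified Lean document; each statement's English description precedes it below -/
import Mathlib

section
/- Let d ≥ 1 be a natural number, let f : ℝ^d → ℂ be a continuous function, let δ > 0, and let a₀, a₁, …, a_n ∈ ℂ with a₀ ≠ 0. Assume that for every y ∈ ℝ^d with ‖y‖ ≤ δ and every x ∈ ℝ^d one has ∑_{k=0}^{n} a_k · f(x + k·y) = 0. Then f is an ordinary polynomial. -/
/-!
Integrating the equation against a bump function `ρ` supported in the `δ`-ball writes `a₀ • f` as
a linear combination of the mollifications `x ↦ ∫ f (x + k • y) ρ y dy`, `k ≥ 1`, so `f` is smooth.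
Differentiating `∑ aₖ f (x + (k t) • v) = 0` `m` times at `t = 0` gives
`(∑ aₖ kᵐ) Dᵐf(x)(v, …, v) = 0`, and since the nodes `k` are distinct and `a₀ ≠ 0`, Vandermonde
provides an `m` with `∑ aₖ kᵐ ≠ 0`. So `t ↦ f (t • x)` has vanishing `m`-th derivative, and
Taylor's formula at `t = 1` writes `f x` as a sum of the homogeneous polynomials `Dʲf(0)(x, …, x)`.
-/

open MeasureTheory Filter Topology Finset
open scoped ContDiff Nat Convolution

theorem exists_sum_mul_pow_ne_zero {R : Type*} [CommRing R] [IsDomain R] {n : ℕ}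
    {v a : Fin n → R} (hv : Function.Injective v) (ha : a ≠ 0) :
    ∃ m : ℕ, ∑ i, a i * v i ^ m ≠ 0 := by
  by_contra! h
  exact ha (Matrix.eq_zero_of_forall_pow_sum_mul_pow_eq_zero hv fun i => h i)

section Smoothing

variable {E : Type*} [NormedAddCommGroup E] [NormedSpace ℝ E] [FiniteDimensional ℝ E]
  [MeasurableSpace E] [BorelSpace E]

theorem contDiff_integral_comp_add_smul_mul (μ : Measure E) [μ.IsAddHaarMeasure] {f : E → ℂ}
    (hf : Continuous f) {ρ : E → ℂ} (hρ : ContDiff ℝ ∞ ρ) (hρc : HasCompactSupport ρ) {c : ℝ}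
    (hc : c ≠ 0) : ContDiff ℝ ∞ fun x => ∫ y, f (x + c • y) * ρ y ∂μ := by
  set ψ : E → ℂ := fun u => ρ ((-c)⁻¹ • u)
  have hψ : ContDiff ℝ ∞ ψ := hρ.comp (contDiff_const_smul _)
  have hψc : HasCompactSupport ψ := hρc.comp_smul (inv_ne_zero (neg_ne_zero.2 hc))
  have hconv : (fun x => ∫ y, f (x + c • y) * ρ y ∂μ) =
      fun x => |((-c) ^ Module.finrank ℝ E)⁻¹| • (ψ ⋆[ContinuousLinearMap.mul ℝ ℂ, μ] f) x := by
    ext x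
    -- `ψ ((-c) • y) = ρ y`, so rescaling by `-c` turns the convolution into our integral
    rw [convolution_def, ← Measure.integral_comp_smul]
    congr 1 with y
    simp [ψ, smul_smul, mul_inv_cancel₀ hc, sub_eq_add_neg, mul_comm]
  rw [hconv]
  exact (hψc.contDiff_convolution_left _ hψ hf.locallyIntegrable).const_smul _

theorem contDiff_of_sum_comp_add_nsmul_eq_zero {f : E → ℂ} (hf : Continuous f) {δ : ℝ}
    (hδ : 0 < δ) {n : ℕ} {a : Fin (n + 1) → ℂ} (ha : a 0 ≠ 0)
    (heq : ∀ y : E, ‖y‖ ≤ δ → ∀ x : E, ∑ k : Fin (n + 1), a k * f (x + (k : ℕ) • y) = 0) :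
    ContDiff ℝ ∞ f := by
  let μ : Measure E := Measure.addHaar
  let ι : ContDiffBump (0 : E) := ⟨δ / 2, δ, by positivity, by linarith⟩
  let ρ : E → ℂ := fun y => ι.normed μ y
  have hρ : ContDiff ℝ ∞ ρ := Complex.ofRealCLM.contDiff.comp ι.contDiff_normed
  have hρc : HasCompactSupport ρ := ι.hasCompactSupport_normed.comp_left Complex.ofReal_zero
  have hρ_int : ∫ y, ρ y ∂μ = 1 := by
    simp only [ρ, integral_complex_ofReal, ι.integral_normed, Complex.ofReal_one]
  have hint : ∀ x (c : ℝ), Integrable (fun y => f (x + c • y) * ρ y) μ := fun x c =>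
    (hf.comp (continuous_const.add (continuous_const_smul c))).mul hρ.continuous
      |>.integrable_of_hasCompactSupport hρc.mul_left
  have hsum : ∀ x, ∑ k : Fin (n + 1), a k * ∫ y, f (x + (k : ℝ) • y) * ρ y ∂μ = 0 := by
    intro x
    have hzero : ∀ y, (∑ k : Fin (n + 1), a k * f (x + (k : ℕ) • y)) * ρ y = 0 := by
      intro y
      by_cases hy : ‖y‖ ≤ δ
      · rw [heq y hy x, zero_mul]
      · have : y ∉ Function.support (ι.normed μ) := by
          rw [ι.support_normed_eq, Metric.mem_ball, dist_zero_right]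
          exact fun h => hy h.le
        simp [ρ, Function.notMem_support.1 this]
    calc ∑ k : Fin (n + 1), a k * ∫ y, f (x + (k : ℝ) • y) * ρ y ∂μ
        = ∫ y, ∑ k : Fin (n + 1), a k * (f (x + (k : ℝ) • y) * ρ y) ∂μ := by
          rw [integral_finsetSum _ fun (k : Fin (n + 1)) _ => (hint x (k : ℕ)).const_mul (a k)]
          simp only [integral_const_mul]
      _ = ∫ y, (∑ k : Fin (n + 1), a k * f (x + (k : ℕ) • y)) * ρ y ∂μ := by
          simp only [Finset.sum_mul, mul_assoc, Nat.cast_smul_eq_nsmul]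
      _ = 0 := by simp only [hzero, integral_zero]
  have hf_eq : f = fun x => -(a 0)⁻¹ *
      ∑ i : Fin n, a i.succ * ∫ y, f (x + ((i + 1 : ℕ) : ℝ) • y) * ρ y ∂μ := by
    ext x
    have := hsum x
    rw [Fin.sum_univ_succ] at this
    simp only [Fin.val_zero, Nat.cast_zero, zero_smul, add_zero, integral_const_mul, hρ_int,
      mul_one, Fin.val_succ] at this
    field_simp
    linear_combination this
  rw [hf_eq]
  exact contDiff_const.mul <| ContDiff.sum fun i _ => contDiff_const.mul <|
    contDiff_integral_comp_add_smul_mul μ hf hρ hρc (by positivity)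

end Smoothing

section LineDerivatives

variable {E F : Type*} [NormedAddCommGroup E] [NormedSpace ℝ E] [NormedAddCommGroup F]
  [NormedSpace ℝ F]

theorem iteratedDeriv_comp_add_smul {f : E → F} {j : ℕ} (hf : ContDiff ℝ j f) (x v : E)
    (t : ℝ) :
    iteratedDeriv j (fun t : ℝ => f (x + t • v)) t =
      iteratedFDeriv ℝ j f (x + t • v) fun _ => v := by
  have hcomp : (fun t : ℝ => f (x + t • v)) =
      (fun y => f (x + y)) ∘ ContinuousLinearMap.toSpanSingleton ℝ v := rfl
  have hshift : ContDiff ℝ j fun y => f (x + y) := hf.comp (contDiff_const.add contDiff_id)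
  rw [hcomp, iteratedDeriv_eq_iteratedFDeriv,
    ContinuousLinearMap.iteratedFDeriv_comp_right _ hshift _ le_rfl,
    ContinuousMultilinearMap.compContinuousLinearMap_apply, iteratedFDeriv_comp_add_left]
  simp

theorem sum_mul_pow_mul_iteratedDeriv_eq_zero {ι : Type*} (s : Finset ι) (a : ι → ℂ)
    (c : ι → ℝ) {g : ℝ → ℂ} {m : ℕ} (hg : ContDiff ℝ m g)
    (h : (fun t => ∑ i ∈ s, a i * g (c i * t)) =ᶠ[𝓝 0] 0) :
    (∑ i ∈ s, a i * (c i : ℂ) ^ m) * iteratedDeriv m g 0 = 0 := by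
  have hdil : ∀ i, ContDiff ℝ m fun t => g (c i * t) := fun i =>
    hg.comp (contDiff_const.mul contDiff_id)
  have hsmooth : ∀ i ∈ s, ContDiffAt ℝ m (fun t => a i * g (c i * t)) 0 := fun i _ =>
    (contDiff_const.mul (hdil i)).contDiffAt
  calc (∑ i ∈ s, a i * (c i : ℂ) ^ m) * iteratedDeriv m g 0
      = iteratedDeriv m (fun t => ∑ i ∈ s, a i * g (c i * t)) 0 := by
        rw [iteratedDeriv_fun_sum hsmooth, Finset.sum_mul]
        refine Finset.sum_congr rfl fun i _ => ?_
        rw [iteratedDeriv_const_mul _ (hdil i).contDiffAt,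
          iteratedDeriv_comp_const_smul hg]
        simp [Complex.real_smul, mul_assoc]
    _ = 0 := by simp [h.iteratedDeriv_eq m]

theorem iteratedFDeriv_diag_eq_zero_of_sum_comp_add_nsmul_eq_zero {f : E → ℂ} {m : ℕ}
    (hf : ContDiff ℝ m f) {δ : ℝ} (hδ : 0 < δ) {n : ℕ} {a : Fin (n + 1) → ℂ}
    (heq : ∀ y : E, ‖y‖ ≤ δ → ∀ x : E, ∑ k : Fin (n + 1), a k * f (x + (k : ℕ) • y) = 0)
    (hm : ∑ k : Fin (n + 1), a k * ((k : ℕ) : ℂ) ^ m ≠ 0) (x v : E) :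
    iteratedFDeriv ℝ m f x (fun _ => v) = 0 := by
  have hsmall : ∀ᶠ t : ℝ in 𝓝 0, ‖t • v‖ ≤ δ := by
    have : Tendsto (fun t : ℝ => ‖t • v‖) (𝓝 0) (𝓝 0) :=
      (continuous_id.smul continuous_const).norm.tendsto' 0 0 (by simp)
    exact this.eventually (eventually_le_nhds hδ)
  have hline : (fun t : ℝ => ∑ k ∈ univ, a k * f (x + ((k : ℕ) * t) • v)) =ᶠ[𝓝 0] 0 := by
    filter_upwards [hsmall] with t ht
    simpa [mul_smul, Nat.cast_smul_eq_nsmul] using heq (t • v) ht x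
  have hg : ContDiff ℝ m fun t : ℝ => f (x + t • v) :=
    hf.comp (contDiff_const.add (contDiff_id.smul contDiff_const))
  have := sum_mul_pow_mul_iteratedDeriv_eq_zero univ a (fun k => (k : ℕ)) hg hline
  rw [iteratedDeriv_comp_add_smul hf, zero_smul, add_zero] at this
  exact (mul_eq_zero.1 this).resolve_left (by simpa using hm)

theorem eq_sum_iteratedFDeriv_of_iteratedFDeriv_diag_eq_zero {f : E → F} {m : ℕ}
    (hf : ContDiff ℝ (m + 1) f) (h : ∀ x v, iteratedFDeriv ℝ m f x (fun _ => v) = 0) (x : E) :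
    f x = ∑ j ∈ range (m + 1), (j ! : ℝ)⁻¹ • iteratedFDeriv ℝ j f 0 fun _ => x := by
  set g : ℝ → F := fun t => f (t • x)
  have hg : ContDiff ℝ (m + 1) g := hf.comp (contDiff_id.smul contDiff_const)
  have hderiv : ∀ j ≤ m + 1, ∀ t, iteratedDeriv j g t = iteratedFDeriv ℝ j f (t • x) fun _ => x :=
    fun j hj t => by
      simpa only [zero_add] using
        iteratedDeriv_comp_add_smul (hf.of_le (by exact_mod_cast hj)) 0 x t
  have hwithin : ∀ j ≤ m + 1, ∀ t ∈ Set.Icc (0 : ℝ) 1,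
      iteratedDerivWithin j g (Set.Icc 0 1) t = iteratedDeriv j g t := fun j hj t ht =>
    iteratedDerivWithin_eq_iteratedDeriv (uniqueDiffOn_Icc zero_lt_one)
      (hg.of_le (by exact_mod_cast hj)).contDiffAt ht
  have hvanish : iteratedDeriv (m + 1) g = 0 := by
    have : iteratedDeriv m g = 0 := funext fun t => (hderiv m (by omega) t).trans (h _ x)
    rw [iteratedDeriv_succ, this, deriv_zero]
  have htaylor := taylor_mean_remainder_bound (C := 0) zero_le_one hg.contDiffOn
    (Set.right_mem_Icc.2 zero_le_one) fun y hy => by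
      rw [hwithin _ le_rfl y hy, hvanish, Pi.zero_apply, norm_zero]
  rw [zero_mul, zero_div, norm_le_zero_iff, sub_eq_zero, taylor_within_apply] at htaylor
  simp only [g, one_smul, sub_zero, one_pow, mul_one] at htaylor
  rw [htaylor]
  refine Finset.sum_congr rfl fun j hj => ?_
  have hj' : j ≤ m + 1 := (Finset.mem_range.1 hj).le
  rw [hwithin j hj' 0 (Set.left_mem_Icc.2 zero_le_one), hderiv j hj', zero_smul]

end LineDerivatives

section Polynomial

variable {ι : Type*} [Fintype ι] [DecidableEq ι]

noncomputable def diagMvPolynomial {j : ℕ}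
    (M : ContinuousMultilinearMap ℝ (fun _ : Fin j => EuclideanSpace ℝ ι) ℂ) :
    MvPolynomial ι ℂ :=
  ∑ r : Fin j → ι, MvPolynomial.C (M fun k => EuclideanSpace.basisFun ι ℝ (r k)) *
    ∏ k, MvPolynomial.X (r k)

theorem eval_diagMvPolynomial {j : ℕ}
    (M : ContinuousMultilinearMap ℝ (fun _ : Fin j => EuclideanSpace ℝ ι) ℂ)
    (x : EuclideanSpace ℝ ι) :
    MvPolynomial.eval (fun i => (x i : ℂ)) (diagMvPolynomial M) = M fun _ => x := by
  set b := EuclideanSpace.basisFun ι ℝ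
  conv_rhs => rw [← b.sum_repr x]
  rw [diagMvPolynomial, map_sum, M.map_sum]
  refine Finset.sum_congr rfl fun r _ => ?_
  rw [M.map_smul_univ]
  simp [b, Complex.real_smul, mul_comm]

end Polynomial

theorem polynomial_of_local_exponential_equation_general
    (d : ℕ)
    (f : EuclideanSpace ℝ (Fin d) → ℂ) (hf : Continuous f)
    (δ : ℝ) (hδ : 0 < δ)
    (n : ℕ) (a : Fin (n + 1) → ℂ) (ha : a 0 ≠ 0)
    (heq : ∀ y : EuclideanSpace ℝ (Fin d), ‖y‖ ≤ δ →
      ∀ x : EuclideanSpace ℝ (Fin d),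
        ∑ k : Fin (n + 1), a k * f (x + (k : ℕ) • y) = 0) :
    ∃ p : MvPolynomial (Fin d) ℂ,
      ∀ x : EuclideanSpace ℝ (Fin d),
        f x = MvPolynomial.eval (fun i => (x i : ℂ)) p := by
  have hsmooth : ContDiff ℝ ∞ f := contDiff_of_sum_comp_add_nsmul_eq_zero hf hδ ha heq
  obtain ⟨m, hm⟩ := exists_sum_mul_pow_ne_zero (v := fun k : Fin (n + 1) => ((k : ℕ) : ℂ))
    (Nat.cast_injective.comp Fin.val_injective) fun h => ha (congrFun h 0)
  have hvanish := iteratedFDeriv_diag_eq_zero_of_sum_comp_add_nsmul_eq_zero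
    (hsmooth.of_le (mod_cast le_top)) hδ heq hm
  refine ⟨∑ j ∈ range (m + 1), MvPolynomial.C ((j ! : ℂ)⁻¹) *
    diagMvPolynomial (iteratedFDeriv ℝ j f 0), fun x => ?_⟩
  rw [eq_sum_iteratedFDeriv_of_iteratedFDeriv_diag_eq_zero
    (hsmooth.of_le (mod_cast le_top)) hvanish x]
  simp [eval_diagMvPolynomial, Complex.real_smul]

/-- If a continuous `f : ℝ^d → ℂ` satisfies `∑_{k=0}^n a_k f(x + k y) = 0` for all
`x` and all `y` with `‖y‖ ≤ δ`, where `a 0 ≠ 0`, then `f` is an ordinary polynomial. -/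
theorem polynomial_of_local_exponential_equation
    (d : ℕ) (hd : 1 ≤ d)
    (f : EuclideanSpace ℝ (Fin d) → ℂ) (hf : Continuous f)
    (δ : ℝ) (hδ : 0 < δ)
    (n : ℕ) (a : Fin (n + 1) → ℂ) (ha : a 0 ≠ 0)
    (heq : ∀ y : EuclideanSpace ℝ (Fin d), ‖y‖ ≤ δ →
      ∀ x : EuclideanSpace ℝ (Fin d),
        ∑ k : Fin (n + 1), a k * f (x + (k : ℕ) • y) = 0) :
    ∃ p : MvPolynomial (Fin d) ℂ,
      ∀ x : EuclideanSpace ℝ (Fin d),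
        f x = MvPolynomial.eval (fun i => (x i : ℂ)) p :=
  polynomial_of_local_exponential_equation_general d f hf δ hδ n a ha heq
end

section
/- Let d ≥ 1 and let V be a finite-dimensional ℂ-subspace of the space of functions from ℝ^d to ℂ that is translation invariant (for every h ∈ ℝ^d and g ∈ V, the function x ↦ g(x + h) lies in V). For y ∈ ℝ^d let T_y : V → V denote the linear endomorphism of V induced by translation, T_y(g) = (x ↦ g(x + y)), and let N = dim V. Then for all y, z ∈ ℝ^d there exist λ, μ : Fin N → ℂ such that the characteristic polynomial of T_y equals ∏_i (X − λ(i)), the characteristic polynomial of T_z equals ∏_i (X − μ(i)), and the characteristic polynomial of T_{y+z} equals ∏_i (X − λ(i)·μ(i)). -/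
/-!
Translations commute, since `T (y + z) = T y * T z`. Commuting endomorphisms `f`, `g` of a
finite-dimensional complex space can be split along the Fitting decomposition of `f - μ`, for an
eigenvalue `μ` (or likewise of `g`), into invariant subspaces of smaller dimension. What remains
are pieces on which `f = c + nilpotent` and `g = d + nilpotent`; there
`f * g = c * d + nilpotent`, so the eigenvalues of `f * g` are the products of those of `f`
and `g`.
-/

open Polynomial Module Set

theorem Commute.isNilpotent_mul_sub_smul_one {R A : Type*} [CommRing R] [Ring A] [Algebra R A]
    {a b : A} (hab : Commute a b) {c d : R} (ha : IsNilpotent (a - c • 1))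
    (hb : IsNilpotent (b - d • 1)) : IsNilpotent (a * b - (c * d) • 1) := by
  have hsplit : a * b - (c * d) • 1 = (a - c • 1) * b + c • (b - d • 1) := by
    simp only [sub_mul, smul_sub, smul_mul_assoc, one_mul, smul_smul]
    abel
  rw [hsplit]
  simp only [← Algebra.algebraMap_eq_smul_one] at ha hb ⊢
  have hac : Commute (a - algebraMap R A c) b := hab.sub_left (Algebra.commute_algebraMap_left c b)
  have hcomm : Commute ((a - algebraMap R A c) * b) (c • (b - algebraMap R A d)) :=
    ((hac.sub_right (Algebra.commute_algebraMap_right d _)).mul_left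
      ((Commute.refl b).sub_right (Algebra.commute_algebraMap_right d b))).smul_right c
  exact hcomm.isNilpotent_add (hac.isNilpotent_mul_right ha) (hb.smul c)

theorem Multiset.exists_fin_prod_map_eq {α M : Type*} [CommMonoid M] (s : Multiset α) {n : ℕ}
    (hs : Multiset.card s = n) :
    ∃ r : Fin n → α, ∀ F : α → M, (s.map F).prod = ∏ i, F (r i) := by
  obtain ⟨l, rfl⟩ := Quot.exists_rep s
  subst hs
  exact ⟨l.get, fun F ↦ (Fin.prod_univ_fun_getElem l F).symm⟩

namespace Module.End

theorem mapsTo_iInf_range_pow_of_commute {R M : Type*} [Ring R] [AddCommGroup M] [Module R M]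
    {φ u : End R M} (h : Commute φ u) :
    MapsTo u (⨅ k : ℕ, LinearMap.range (φ ^ k) : Submodule R M)
      (⨅ k : ℕ, LinearMap.range (φ ^ k) : Submodule R M) := by
  intro x hx
  simp only [SetLike.mem_coe, Submodule.mem_iInf, LinearMap.mem_range] at hx ⊢
  intro k
  obtain ⟨y, rfl⟩ := hx k
  exact ⟨u y, by rw [← mul_apply, ← mul_apply, (h.pow_left k).eq]⟩

section FiniteDimensional

variable {K V : Type*} [Field K] [AddCommGroup V] [Module K V] [FiniteDimensional K V]

theorem charpoly_eq_X_sub_C_pow_of_isNilpotent_sub {f : End K V} {c : K}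
    (h : IsNilpotent (f - c • 1)) : f.charpoly = (X - C c) ^ finrank K V := by
  have hshift := LinearMap.charpoly_sub_smul f c ▸ h.charpoly_eq_X_pow_finrank
  calc f.charpoly = (f.charpoly.comp (X + C c)).comp (X - C c) := by simp [comp_assoc]
    _ = (X - C c) ^ finrank K V := by rw [hshift, pow_comp, X_comp]

theorem charpoly_eq_mul_of_isCompl (f : End K V) {p q : Submodule K V} (hpq : IsCompl p q)
    (hp : MapsTo f p p) (hq : MapsTo f q q) :
    f.charpoly = (f.restrict hp).charpoly * (f.restrict hq).charpoly := by
  let e := Submodule.prodEquivOfIsCompl p q hpq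
  have hconj : (f.restrict hp).prodMap (f.restrict hq) = e.symm.conj f := by
    refine LinearMap.ext fun z => ?_
    rw [LinearEquiv.conj_apply_apply, LinearEquiv.symm_symm, LinearEquiv.eq_symm_apply]
    simp only [LinearMap.prodMap_apply, Submodule.coe_prodEquivOfIsCompl', map_add, e]
    rfl
  rw [← e.symm.charpoly_conj f, ← hconj, LinearMap.charpoly_prodMap]

theorem isNilpotent_sub_smul_one_of_maxGenEigenspace_eq_top {f : End K V} {c : K}
    (h : f.maxGenEigenspace c = ⊤) : IsNilpotent (f - c • 1) := by
  rw [maxGenEigenspace_eq_genEigenspace_finrank, genEigenspace_nat] at h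
  exact ⟨finrank K V, LinearMap.ker_eq_top.mp h⟩

/-- `p` and `q` are the Fitting decomposition of `f - μ` for an eigenvalue `μ`: the generalized
eigenspace, nonzero because of an eigenvector, and the stable range of `f - μ`. -/
theorem exists_isCompl_mapsTo_of_forall_not_isNilpotent [IsAlgClosed K] (f : End K V)
    (hf : ∀ c : K, ¬IsNilpotent (f - c • 1)) :
    ∃ p q : Submodule K V, IsCompl p q ∧ p ≠ ⊤ ∧ q ≠ ⊤ ∧
      ∀ u : End K V, Commute f u → MapsTo u p p ∧ MapsTo u q q := by
  have : Nontrivial V := by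
    by_contra hV
    have := not_nontrivial_iff_subsingleton.mp hV
    exact hf 0 ⟨1, Subsingleton.elim _ _⟩
  obtain ⟨μ, hμ⟩ := f.exists_eigenvalue
  obtain ⟨v, hv⟩ := hμ.exists_hasEigenvector
  set φ := f - μ • (1 : End K V)
  have hfit : IsCompl (f.maxGenEigenspace μ) (⨅ k : ℕ, LinearMap.range (φ ^ k)) := by
    simpa [← iSup_genEigenspace_eq, genEigenspace_nat] using
      LinearMap.isCompl_iSup_ker_pow_iInf_range_pow φ
  refine ⟨_, _, hfit,
    fun htop ↦ hf μ (isNilpotent_sub_smul_one_of_maxGenEigenspace_eq_top htop),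
    fun htop ↦ hv.2 ?_, fun u hu ↦ ⟨mapsTo_maxGenEigenspace_of_comm hu μ,
      mapsTo_iInf_range_pow_of_commute (hu.sub_left (Algebra.commute_algebraMap_left μ u))⟩⟩
  rw [← Submodule.mem_bot K, ← hfit.inf_eq_bot, htop, inf_top_eq]
  exact (f.genEigenspace μ).monotone le_top hv.1

def PairedEigenvalues (f g : End K V) : Prop :=
  ∃ s : Multiset (K × K),
    f.charpoly = (s.map fun r ↦ X - C r.1).prod ∧
    g.charpoly = (s.map fun r ↦ X - C r.2).prod ∧
    (f * g).charpoly = (s.map fun r ↦ X - C (r.1 * r.2)).prod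

theorem PairedEigenvalues.symm {f g : End K V} (hfg : Commute f g) (h : PairedEigenvalues f g) :
    PairedEigenvalues g f := by
  obtain ⟨s, hf, hg, hmul⟩ := h
  refine ⟨s.map Prod.swap, ?_, ?_, ?_⟩
  · simpa [Multiset.map_map] using hg
  · simpa [Multiset.map_map] using hf
  · simpa [Multiset.map_map, mul_comm, ← hfg.eq] using hmul

theorem pairedEigenvalues_of_isNilpotent_sub {f g : End K V} (hfg : Commute f g) {c d : K}
    (hf : IsNilpotent (f - c • 1)) (hg : IsNilpotent (g - d • 1)) : PairedEigenvalues f g := by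
  refine ⟨Multiset.replicate (finrank K V) (c, d), ?_, ?_, ?_⟩ <;>
    simp only [Multiset.map_replicate, Multiset.prod_replicate]
  · exact charpoly_eq_X_sub_C_pow_of_isNilpotent_sub hf
  · exact charpoly_eq_X_sub_C_pow_of_isNilpotent_sub hg
  · exact charpoly_eq_X_sub_C_pow_of_isNilpotent_sub (hfg.isNilpotent_mul_sub_smul_one hf hg)

theorem PairedEigenvalues.of_isCompl {f g : End K V} {p q : Submodule K V} (hpq : IsCompl p q)
    (hfp : MapsTo f p p) (hgp : MapsTo g p p) (hfq : MapsTo f q q) (hgq : MapsTo g q q)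
    (hp : PairedEigenvalues (f.restrict hfp) (g.restrict hgp))
    (hq : PairedEigenvalues (f.restrict hfq) (g.restrict hgq)) : PairedEigenvalues f g := by
  obtain ⟨s, hfs, hgs, hmuls⟩ := hp
  obtain ⟨t, hft, hgt, hmult⟩ := hq
  refine ⟨s + t, ?_, ?_, ?_⟩
  · rw [charpoly_eq_mul_of_isCompl f hpq hfp hfq, hfs, hft, Multiset.map_add, Multiset.prod_add]
  · rw [charpoly_eq_mul_of_isCompl g hpq hgp hgq, hgs, hgt, Multiset.map_add, Multiset.prod_add]
  · rw [charpoly_eq_mul_of_isCompl (f * g) hpq (hfp.comp hgp) (hfq.comp hgq),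
      Multiset.map_add, Multiset.prod_add, ← hmuls, ← hmult]
    rfl

theorem pairedEigenvalues_of_commute [IsAlgClosed K] {f g : End K V} (hfg : Commute f g) :
    PairedEigenvalues f g := by
  induction hn : finrank K V using Nat.strong_induction_on generalizing V with
  | _ n ih =>
  have split : ∀ {f g : End K V}, Commute f g → (∀ c : K, ¬IsNilpotent (f - c • 1)) →
      PairedEigenvalues f g := by
    intro f g hfg hf
    obtain ⟨p, q, hpq, hp, hq, hinv⟩ := exists_isCompl_mapsTo_of_forall_not_isNilpotent f hf
    obtain ⟨hfp, hfq⟩ := hinv f (.refl f)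
    obtain ⟨hgp, hgq⟩ := hinv g hfg
    exact .of_isCompl hpq hfp hgp hfq hgq
      (ih _ (hn ▸ Submodule.finrank_lt hp) (LinearMap.restrict_commute hfg hfp hgp) rfl)
      (ih _ (hn ▸ Submodule.finrank_lt hq) (LinearMap.restrict_commute hfg hfq hgq) rfl)
  by_cases hf : ∃ c : K, IsNilpotent (f - c • 1)
  · by_cases hg : ∃ d : K, IsNilpotent (g - d • 1)
    · obtain ⟨c, hc⟩ := hf
      obtain ⟨d, hd⟩ := hg
      exact pairedEigenvalues_of_isNilpotent_sub hfg hc hd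
    · exact (split hfg.symm (not_exists.mp hg)).symm hfg.symm
  · exact split hfg (not_exists.mp hf)

theorem PairedEigenvalues.exists_fin {f g : End K V} (h : PairedEigenvalues f g) :
    ∃ lam mu : Fin (finrank K V) → K,
      f.charpoly = ∏ i, (X - C (lam i)) ∧ g.charpoly = ∏ i, (X - C (mu i)) ∧
      (f * g).charpoly = ∏ i, (X - C (lam i * mu i)) := by
  obtain ⟨s, hf, hg, hmul⟩ := h
  have hcard : Multiset.card s = finrank K V := by
    rw [← f.charpoly_natDegree, hf]
    simpa [Multiset.map_map] using (natDegree_multiset_prod_X_sub_C_eq_card (s.map Prod.fst)).symm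
  obtain ⟨r, hr⟩ := s.exists_fin_prod_map_eq (M := K[X]) hcard
  exact ⟨fun i ↦ (r i).1, fun i ↦ (r i).2,
    hf.trans (hr _), hg.trans (hr _), hmul.trans (hr _)⟩

end FiniteDimensional

end Module.End

theorem charpoly_translation_add_general
    (d : ℕ)
    (V : Submodule ℂ (EuclideanSpace ℝ (Fin d) → ℂ)) [FiniteDimensional ℂ V]
    (T : EuclideanSpace ℝ (Fin d) → (V →ₗ[ℂ] V))
    (hT : ∀ (y : EuclideanSpace ℝ (Fin d)) (g : V) (x : EuclideanSpace ℝ (Fin d)),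
      (T y g : EuclideanSpace ℝ (Fin d) → ℂ) x
        = (g : EuclideanSpace ℝ (Fin d) → ℂ) (x + y)) :
    ∀ y z : EuclideanSpace ℝ (Fin d),
      ∃ lam mu : Fin (Module.finrank ℂ V) → ℂ,
        (T y).charpoly = ∏ i, (Polynomial.X - Polynomial.C (lam i)) ∧
        (T z).charpoly = ∏ i, (Polynomial.X - Polynomial.C (mu i)) ∧
        (T (y + z)).charpoly = ∏ i, (Polynomial.X - Polynomial.C (lam i * mu i)) := by
  have hmul : ∀ y z, T (y + z) = T y * T z := fun y z ↦
    LinearMap.ext fun g ↦ Subtype.ext <| funext fun x ↦ by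
      rw [Module.End.mul_apply, hT, hT, hT, add_assoc]
  have hcomm : ∀ y z, Commute (T y) (T z) := fun y z ↦ by
    rw [commute_iff_eq, ← hmul, ← hmul, add_comm]
  intro y z
  rw [hmul]
  exact (Module.End.pairedEigenvalues_of_commute (hcomm y z)).exists_fin

/-- On a finite-dimensional translation-invariant subspace `V` of functions `ℝ^d → ℂ`,
the eigenvalues of the translation operators can be arranged so that the eigenvalues of
`T_{y+z}` are the products of the corresponding eigenvalues of `T_y` and `T_z`. -/
theorem charpoly_translation_add
    (d : ℕ) (hd : 1 ≤ d)
    (V : Submodule ℂ (EuclideanSpace ℝ (Fin d) → ℂ)) [FiniteDimensional ℂ V]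
    (htrans : ∀ (h : EuclideanSpace ℝ (Fin d)) (g : EuclideanSpace ℝ (Fin d) → ℂ),
      g ∈ V → (fun x => g (x + h)) ∈ V)
    (T : EuclideanSpace ℝ (Fin d) → (V →ₗ[ℂ] V))
    (hT : ∀ (y : EuclideanSpace ℝ (Fin d)) (g : V) (x : EuclideanSpace ℝ (Fin d)),
      (T y g : EuclideanSpace ℝ (Fin d) → ℂ) x
        = (g : EuclideanSpace ℝ (Fin d) → ℂ) (x + y)) :
    ∀ y z : EuclideanSpace ℝ (Fin d),
      ∃ lam mu : Fin (Module.finrank ℂ V) → ℂ,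
        (T y).charpoly = ∏ i, (Polynomial.X - Polynomial.C (lam i)) ∧
        (T z).charpoly = ∏ i, (Polynomial.X - Polynomial.C (mu i)) ∧
        (T (y + z)).charpoly = ∏ i, (Polynomial.X - Polynomial.C (lam i * mu i)) :=
  charpoly_translation_add_general d V T hT
end

section
/- Let d ≥ 2 and let V be a finite-dimensional ℂ-subspace of the space of functions from ℝ^d to ℂ that is translation invariant (for every h ∈ ℝ^d and g ∈ V, the function x ↦ g(x + h) lies in V) and invariant under orthogonal transformations (for every linear isometry equivalence P of ℝ^d and g ∈ V, the function x ↦ g(P x) lies in V). Then there exists a polynomial q ∈ ℂ[z] with q(0) ≠ 0 such that for every z ∈ ℝ^d with ‖z‖ ≤ 2, every g ∈ V, and every x ∈ ℝ^d, one has ∑_{k=0}^{deg q} (coefficient of z^k in q) · g(x + k·z) = 0. -/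
open Module Polynomial

/-!
Every translation `τ_z` of `V` is unipotent, so `q = (X - 1) ^ dim V` works for all `z` at once.

The translations commute, so each eigenspace of `τ_z` contains a common eigenvector of all of
them, and such a vector is a multiple of an additive character `ψ ∈ V` with `ψ z` the
eigenvalue. Characters are linearly independent, so `V` contains finitely many, and
`O(d)` permutes them: the stabiliser of `ψ` has finite index `m` and contains the `m!`-th power
of every isometry. As `d ≥ 2`, the rotation by `π / m!` in a plane through `w` has `m!`-th power
sending `w` to `-w`, hence `ψ (-w) = ψ w`, `ψ ^ 2 = 1`, and `ψ = 1` by halving. So all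
eigenvalues of `τ_z` are `1`, and Cayley–Hamilton gives `(τ_z - 1) ^ dim V = 0`.
-/

theorem Module.End.exists_forall_hasEigenvector_of_commute {ι K V : Type*} [Field K]
    [IsAlgClosed K] [AddCommGroup V] [Module K V] [FiniteDimensional K V] (f : ι → End K V)
    (hf : ∀ i j, Commute (f i) (f j)) (W : Submodule K V) (hW : W ≠ ⊥)
    (hfW : ∀ i, ∀ w ∈ W, f i w ∈ W) :
    ∃ v ∈ W, v ≠ 0 ∧ ∀ i, ∃ c : K, f i v = c • v := by
  induction hn : finrank K W using Nat.strong_induction_on generalizing W with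
  | _ n ih =>
  by_cases hscalar : ∀ i, ∃ c : K, ∀ w ∈ W, f i w = c • w
  · obtain ⟨v, hvW, hv0⟩ := W.exists_mem_ne_zero_of_ne_bot hW
    exact ⟨v, hvW, hv0, fun i => (hscalar i).imp fun c hc => hc v hvW⟩
  push Not at hscalar
  obtain ⟨i, hi⟩ := hscalar
  have : Nontrivial W := Submodule.nontrivial_iff_ne_bot.2 hW
  obtain ⟨c, hc⟩ := exists_eigenvalue ((f i).restrict (hfW i))
  obtain ⟨v, hv⟩ := hc.exists_hasEigenvector
  let W' := W ⊓ (f i).eigenspace c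
  have hW'_ne : W' ≠ ⊥ := by
    refine (Submodule.ne_bot_iff _).2 ⟨v, ⟨v.2, ?_⟩, by simpa using hv.2⟩
    exact mem_eigenspace_iff.2 (congrArg Subtype.val (mem_eigenspace_iff.1 hv.1))
  have hW'_lt : W' < W := by
    refine lt_of_le_of_ne inf_le_left fun heq => ?_
    obtain ⟨w, hwW, hw⟩ := hi c
    have : w ∈ W' := heq ▸ hwW
    exact hw (mem_eigenspace_iff.1 this.2)
  have hfW' (j) : ∀ w ∈ W', f j w ∈ W' := fun w hw =>
    ⟨hfW j w hw.1, mapsTo_genEigenspace_of_comm (hf i j) c 1 hw.2⟩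
  obtain ⟨u, hu, hu0, hcommon⟩ :=
    ih _ (hn ▸ Submodule.finrank_lt_finrank_of_lt hW'_lt) W' hW'_ne hfW' rfl
  exact ⟨u, hu.1, hu0, hcommon⟩

theorem LinearMap.charpoly_eq_X_sub_C_pow_of_forall_hasEigenvalue {K M : Type*} [Field K]
    [IsAlgClosed K] [AddCommGroup M] [Module K M] [FiniteDimensional K M] (φ : End K M) (a : K)
    (h : ∀ μ, φ.HasEigenvalue μ → μ = a) : φ.charpoly = (X - C a) ^ finrank K M := by
  have hroots : φ.charpoly.roots = Multiset.replicate (finrank K M) a := by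
    refine Multiset.eq_replicate.2 ⟨?_, fun μ hμ => h μ ?_⟩
    · rw [← φ.charpoly_natDegree, (IsAlgClosed.splits _).natDegree_eq_card_roots]
    · exact (End.hasEigenvalue_iff_isRoot_charpoly φ μ).2 (isRoot_of_mem_roots hμ)
  rw [(IsAlgClosed.splits _).eq_prod_roots_of_monic φ.charpoly_monic, hroots,
    Multiset.map_replicate, Multiset.prod_replicate]

theorem AddChar.exists_eq_smul_of_forall_translate_eq_mul {A K : Type*} [AddCommMonoid A] [Field K]
    (g : A → K) (hg : g ≠ 0) (h : ∀ a, ∃ c, ∀ x, g (x + a) = c * g x) :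
    g 0 ≠ 0 ∧ ∃ ψ : AddChar A K, g = g 0 • ⇑ψ := by
  have h0 : g 0 ≠ 0 := by
    refine fun h0 => hg (funext fun a => ?_)
    obtain ⟨c, hc⟩ := h a
    simpa [h0] using hc 0
  refine ⟨h0, ⟨fun x => g x / g 0, div_self h0, fun x y => ?_⟩, ?_⟩
  · obtain ⟨c, hc⟩ := h y
    have hcy : g y = c * g 0 := by simpa using hc 0
    rw [hc x, hcy]
    field_simp
  · funext x
    simp [mul_div_cancel₀ _ h0]

namespace Submodule

variable {A K : Type*} [AddCommMonoid A] [Field K] {V : Submodule K (A → K)}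
  (htrans : ∀ (a : A) (g : A → K), g ∈ V → (fun x => g (x + a)) ∈ V)

def translationEnd (a : A) : End K V where
  toFun g := ⟨fun x => (g : A → K) (x + a), htrans a g g.2⟩
  map_add' _ _ := rfl
  map_smul' _ _ := rfl

@[simp] theorem coe_translationEnd_apply (a : A) (g : V) :
    (translationEnd htrans a g : A → K) = fun x => (g : A → K) (x + a) := rfl

theorem commute_translationEnd (a b : A) :
    Commute (translationEnd htrans a) (translationEnd htrans b) :=
  LinearMap.ext fun g => Subtype.ext <| funext fun x => by simp [add_right_comm]

theorem coe_translationEnd_pow_apply (a : A) (n : ℕ) (g : V) (x : A) :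
    ((translationEnd htrans a ^ n) g : A → K) x = (g : A → K) (x + n • a) := by
  induction n generalizing x with
  | zero => simp
  | succ n ih =>
    simp only [pow_succ', End.mul_apply, coe_translationEnd_apply, ih, succ_nsmul', add_assoc]

theorem aeval_translationEnd_apply (p : K[X]) (a : A) (g : V) (x : A) :
    (aeval (translationEnd htrans a) p g : A → K) x =
      ∑ k ∈ Finset.range (p.natDegree + 1), p.coeff k * (g : A → K) (x + k • a) := by
  simp [aeval_eq_sum_range, coe_translationEnd_pow_apply]

theorem finite_setOf_addChar_mem [FiniteDimensional K V] :
    {ψ : AddChar A K | ⇑ψ ∈ V}.Finite := by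
  have hli : LinearIndependent K fun ψ : AddChar A K => (ψ : A → K) :=
    (linearIndependent_monoidHom (Multiplicative A) K).comp _ AddChar.toMonoidHomEquiv.injective
  have hliV :
      LinearIndependent K fun ψ : {ψ : AddChar A K | ⇑ψ ∈ V} => (⟨ψ, ψ.2⟩ : V) :=
    .of_comp V.subtype (hli.comp _ Subtype.val_injective)
  exact Set.finite_coe_iff.1 hliV.finite

theorem exists_addChar_of_hasEigenvalue [IsAlgClosed K] [FiniteDimensional K V] {a : A} {μ : K}
    (hμ : (translationEnd htrans a).HasEigenvalue μ) :
    ∃ ψ : AddChar A K, ⇑ψ ∈ V ∧ ψ a = μ := by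
  obtain ⟨g, hgμ, hg0, hcommon⟩ := End.exists_forall_hasEigenvector_of_commute
    (translationEnd htrans) (commute_translationEnd htrans) _ hμ
    fun b => End.mapsTo_genEigenspace_of_comm (commute_translationEnd htrans a b) μ 1
  obtain ⟨hg0', ψ, hψ⟩ := AddChar.exists_eq_smul_of_forall_translate_eq_mul (g : A → K)
    (by simpa using hg0) fun b => (hcommon b).imp fun c hc x => congrFun (congrArg Subtype.val hc) x
  refine ⟨ψ, ?_, ?_⟩
  · have : (ψ : A → K) = ((g : A → K) 0)⁻¹ • (g : A → K) := by
      rw [eq_inv_smul_iff₀ hg0', ← hψ]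
    exact this ▸ V.smul_mem _ g.2
  · have hga : (g : A → K) a = μ * (g : A → K) 0 := by
      simpa using congrFun (congrArg Subtype.val (End.mem_eigenspace_iff.1 hgμ)) 0
    have hψa := congrFun hψ a
    simp only [Pi.smul_apply, smul_eq_mul] at hψa
    exact mul_left_cancel₀ hg0' (by rw [← hψa, hga, mul_comm])

end Submodule

theorem MulAction.pow_factorial_ncard_orbit_smul {G X : Type*} [Group G] [MulAction G X] {x : X}
    (h : (orbit G x).Finite) (g : G) : g ^ (orbit G x).ncard.factorial • x = x := by
  have hindex : (stabilizer G x).index ≠ 0 := by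
    rw [index_stabilizer]
    exact ((Set.ncard_pos h).2 ⟨x, mem_orbit_self x⟩).ne'
  exact mem_stabilizer_iff.1 <| Subgroup.pow_mem_of_index_ne_zero_of_dvd hindex g
    fun m hm hle => Nat.dvd_factorial hm (index_stabilizer G x ▸ hle)

theorem Submodule.exists_finrank_eq_two_mem {K V : Type*} [Field K] [AddCommGroup V] [Module K V]
    (hV : 2 ≤ finrank K V) {w : V} (hw : w ≠ 0) :
    ∃ W : Submodule K V, finrank K W = 2 ∧ w ∈ W := by
  have : FiniteDimensional K V := Module.finite_of_finrank_pos (by omega)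
  obtain ⟨u, hu⟩ : ∃ u, u ∉ K ∙ w := by
    by_contra! h
    have htop : K ∙ w = ⊤ := eq_top_iff.2 fun u _ => h u
    have := finrank_span_singleton (K := K) hw
    rw [htop, finrank_top] at this
    omega
  have hli : LinearIndependent K ![u, w] := by
    rw [linearIndependent_fin2]
    refine ⟨hw, fun a hau => hu ?_⟩
    rw [← show a • w = u by simpa using hau]
    exact smul_mem _ a (mem_span_singleton_self w)
  exact ⟨span K (Set.range ![u, w]), by simp [finrank_span_eq_card hli],
    subset_span ⟨1, rfl⟩⟩

namespace LinearIsometryEquiv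

variable {R E : Type*} [Semiring R] [SeminormedAddCommGroup E] [Module R E]

instance applyMulAction : MulAction (E ≃ₗᵢ[R] E) E where
  smul P x := P x
  one_smul _ := rfl
  mul_smul _ _ _ := rfl

@[simp] theorem smul_def (P : E ≃ₗᵢ[R] E) (x : E) : P • x = P x := rfl

end LinearIsometryEquiv

namespace Orientation

variable {E : Type*} [NormedAddCommGroup E] [InnerProductSpace ℝ E] {K : Submodule ℝ E}
  [Fact (finrank ℝ K = 2)] [K.HasOrthogonalProjection] (o : Orientation ℝ K (Fin 2))

noncomputable def planeRotation (θ : Real.Angle) : E ≃ₗᵢ[ℝ] E :=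
  K.orthogonalDecomposition.trans <|
    ((o.rotation θ).withLpProdCongr 2 (LinearIsometryEquiv.refl ℝ Kᗮ)).trans
      K.orthogonalDecomposition.symm

theorem planeRotation_apply_coe (θ : Real.Angle) (v : K) :
    o.planeRotation θ v = o.rotation θ v := by
  simp [planeRotation]

theorem planeRotation_pow_apply_coe (θ : Real.Angle) (n : ℕ) (v : K) :
    (o.planeRotation θ ^ n) v = o.rotation (n • θ) v := by
  induction n with
  | zero => simp
  | succ n ih =>
    rw [pow_succ', LinearIsometryEquiv.coe_mul, Function.comp_apply, ih, planeRotation_apply_coe,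
      rotation_rotation, succ_nsmul']

end Orientation

theorem exists_linearIsometryEquiv_pow_apply_eq_neg {E : Type*} [NormedAddCommGroup E]
    [InnerProductSpace ℝ E] (hE : 2 ≤ finrank ℝ E) (w : E) {N : ℕ} (hN : N ≠ 0) :
    ∃ S : E ≃ₗᵢ[ℝ] E, (S ^ N) w = -w := by
  rcases eq_or_ne w 0 with rfl | hw
  · exact ⟨1, by simp⟩
  obtain ⟨K, hK, hwK⟩ := Submodule.exists_finrank_eq_two_mem hE hw
  have : Fact (finrank ℝ K = 2) := ⟨hK⟩
  have : FiniteDimensional ℝ K := .of_fact_finrank_eq_two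
  let o : Orientation ℝ K (Fin 2) := (finBasisOfFinrankEq ℝ K hK).orientation
  have hangle : N • ((Real.pi / N : ℝ) : Real.Angle) = Real.pi := by
    rw [← Real.Angle.coe_nsmul, nsmul_eq_mul, mul_div_cancel₀ _ (Nat.cast_ne_zero.2 hN)]
  refine ⟨o.planeRotation (Real.pi / N : ℝ), ?_⟩
  simpa [hangle, o.rotation_pi] using
    o.planeRotation_pow_apply_coe (Real.pi / N : ℝ) N ⟨w, hwK⟩

theorem AddChar.eq_one_of_finite_orbit {E M : Type*} [NormedAddCommGroup E]
    [InnerProductSpace ℝ E] (hE : 2 ≤ finrank ℝ E) [Monoid M] (ψ : AddChar E M)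
    (h : (MulAction.orbit (E ≃ₗᵢ[ℝ] E)ᵈᵐᵃ (ψ : E → M)).Finite) : ψ = 1 := by
  have hneg (w : E) : ψ (-w) = ψ w := by
    obtain ⟨S, hS⟩ := exists_linearIsometryEquiv_pow_apply_eq_neg hE w (Nat.factorial_ne_zero _)
    have := congrFun (MulAction.pow_factorial_ncard_orbit_smul h (DomMulAct.mk S)) w
    rwa [← DomMulAct.mk_pow, DomMulAct.smul_apply, Equiv.symm_apply_apply,
      LinearIsometryEquiv.smul_def, hS] at this
  have hsq (w : E) : ψ w * ψ w = 1 := by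
    rw [← map_zero_eq_one ψ, ← add_neg_cancel w, map_add_eq_mul, hneg]
  ext z
  rw [one_apply, ← hsq ((2⁻¹ : ℝ) • z), ← map_add_eq_mul, ← add_smul]
  norm_num

/-- For a finite-dimensional, translation- and orthogonally-invariant subspace `V` of
functions `ℝ^d → ℂ` (`d ≥ 2`), there is a single polynomial `q` with `q(0) ≠ 0` such
that `q(τ_z) g = 0` for every `g ∈ V` and every `z` with `‖z‖ ≤ 2`. -/
theorem exists_annihilating_polynomial_of_invariant_subspace
    (d : ℕ) (hd : 2 ≤ d)
    (V : Submodule ℂ (EuclideanSpace ℝ (Fin d) → ℂ)) [FiniteDimensional ℂ V]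
    (htrans : ∀ (h : EuclideanSpace ℝ (Fin d)) (g : EuclideanSpace ℝ (Fin d) → ℂ),
      g ∈ V → (fun x => g (x + h)) ∈ V)
    (horth : ∀ (P : EuclideanSpace ℝ (Fin d) ≃ₗᵢ[ℝ] EuclideanSpace ℝ (Fin d))
      (g : EuclideanSpace ℝ (Fin d) → ℂ), g ∈ V → (fun x => g (P x)) ∈ V) :
    ∃ q : Polynomial ℂ, q.eval 0 ≠ 0 ∧
      ∀ z : EuclideanSpace ℝ (Fin d), ‖z‖ ≤ 2 →
        ∀ g ∈ V, ∀ x : EuclideanSpace ℝ (Fin d),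
          ∑ k ∈ Finset.range (q.natDegree + 1), q.coeff k * g (x + k • z) = 0 := by
  have hE : 2 ≤ finrank ℝ (EuclideanSpace ℝ (Fin d)) := by rwa [finrank_euclideanSpace_fin]
  have htrivial (ψ : AddChar (EuclideanSpace ℝ (Fin d)) ℂ) (hψ : ⇑ψ ∈ V) : ψ = 1 := by
    refine ψ.eq_one_of_finite_orbit hE <| (V.finite_setOf_addChar_mem.image DFunLike.coe).subset ?_
    rintro _ ⟨P, rfl⟩
    exact ⟨ψ.compAddMonoidHom (DomMulAct.mk.symm P).toLinearEquiv.toAddMonoidHom,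
      horth _ _ hψ, rfl⟩
  refine ⟨(X - C 1) ^ finrank ℂ V, by simp, fun z _ g hg x => ?_⟩
  have hcharpoly : (V.translationEnd htrans z).charpoly = (X - C 1) ^ finrank ℂ V :=
    LinearMap.charpoly_eq_X_sub_C_pow_of_forall_hasEigenvalue _ 1 fun μ hμ => by
      obtain ⟨ψ, hψV, rfl⟩ := V.exists_addChar_of_hasEigenvalue htrans hμ
      rw [htrivial ψ hψV, AddChar.one_apply]
  rw [← V.aeval_translationEnd_apply htrans _ z ⟨g, hg⟩ x, ← hcharpoly,
    LinearMap.aeval_self_charpoly]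
  rfl
end

section
/- Let d ≥ 1, let f : ℝ^d → ℂ be any function, let δ > 0 and n ≥ 1, and let a₀, a₁, …, a_n ∈ ℂ. Assume that for every y ∈ ℝ^d with ‖y‖ < δ and every x ∈ ℝ^d one has ∑_{k=0}^{n} a_k · f(x + k·y) = 0. Then for all h₁, …, h_n ∈ ℝ^d with ‖h_i‖ < δ/2^n for each i, and for all x ∈ ℝ^d, one has a₀ · (Δ_{h_n} Δ_{2·h_{n−1}} ⋯ Δ_{(n−1)·h_2} Δ_{n·h_1} f)(x) = 0, where the difference operators are composed. -/
/-- The first-order difference operator `Δ_h` on functions `ℝ^d → ℂ`. -/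
def deltaOp {d : ℕ} (h : EuclideanSpace ℝ (Fin d))
    (f : EuclideanSpace ℝ (Fin d) → ℂ) : EuclideanSpace ℝ (Fin d) → ℂ :=
  fun x => f (x + h) - f x

lemma aux_iterated (m : ℕ) : ∀ {d : ℕ} (a : Fin (m + 1) → ℂ)
    (F : Fin (m + 1) → EuclideanSpace ℝ (Fin d) → ℂ) (δ : ℝ), 0 < δ →
    (∀ y : EuclideanSpace ℝ (Fin d), ‖y‖ < δ →
      ∀ x : EuclideanSpace ℝ (Fin d),
        ∑ k : Fin (m + 1), a k * F k (x + (k : ℕ) • y) = 0) →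
    ∀ hs : Fin m → EuclideanSpace ℝ (Fin d), (∀ i, ‖hs i‖ < δ / 2 ^ m) →
    ∀ x : EuclideanSpace ℝ (Fin d),
      a 0 * (Fin.foldl m (fun g k => deltaOp ((m - (k : ℕ)) • hs k) g) (F 0)) x = 0 := by
  induction m with
  | zero =>
    intro d a F δ hδ heq hs _ x
    simpa using heq 0 (by simpa using hδ) x
  | succ m ih =>
    intro d a F δ hδ heq hs hhs x
    have h2pow : (2 : ℝ) * 2 ^ m = 2 ^ (m + 1) := by ring
    have h0 : ‖hs 0‖ < δ / 2 := by
      have h1 := hhs 0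
      have hp : (1 : ℝ) ≤ 2 ^ m := one_le_pow₀ (by norm_num)
      have h2 : (2 : ℝ) ≤ 2 ^ (m + 1) := by rw [← h2pow]; nlinarith
      have h3 : δ / 2 ^ (m + 1) ≤ δ / 2 := by gcongr
      linarith
    have key : ∀ y : EuclideanSpace ℝ (Fin d), ‖y‖ < δ / 2 →
        ∀ x : EuclideanSpace ℝ (Fin d),
          ∑ k : Fin (m + 1), a k.castSucc *
            (deltaOp ((m + 1 - (k : ℕ)) • hs 0) (F k.castSucc)) (x + (k : ℕ) • y) = 0 := by
      intro y hy x
      have hy1 : ‖y - hs 0‖ < δ := by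
        calc ‖y - hs 0‖ ≤ ‖y‖ + ‖hs 0‖ := norm_sub_le _ _
        _ < δ := by linarith
      have h1 := heq (y - hs 0) hy1 (x + (m + 1) • hs 0)
      have h2 := heq y (by linarith) x
      have e : ∀ k : Fin (m + 2),
          x + (m + 1) • hs 0 + (k : ℕ) • (y - hs 0)
            = x + (k : ℕ) • y + ((m + 1) - (k : ℕ)) • hs 0 := by
        intro k
        have hk : (k : ℕ) ≤ m + 1 := Nat.lt_succ_iff.mp k.isLt
        rw [smul_sub, sub_nsmul (hs 0) hk]
        abel
      have h3 : ∑ k : Fin (m + 2),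
          a k * (F k (x + (k : ℕ) • y + ((m + 1) - (k : ℕ)) • hs 0)
            - F k (x + (k : ℕ) • y)) = 0 := by
        simp only [mul_sub]
        rw [Finset.sum_sub_distrib]
        simp only [← e]
        rw [h1, h2, sub_zero]
      rw [Fin.sum_univ_castSucc] at h3
      simp only [Fin.val_last, Nat.sub_self, zero_smul, add_zero, sub_self, mul_zero,
        Fin.coe_castSucc] at h3
      rw [← h3]
      exact Finset.sum_congr rfl fun k _ => rfl
    have hbound : ∀ i : Fin m, ‖hs i.succ‖ < (δ / 2) / 2 ^ m := by
      intro i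
      have h1 := hhs i.succ
      rw [div_div, h2pow]
      exact h1
    have main := ih (fun k => a k.castSucc)
      (fun k => deltaOp ((m + 1 - (k : ℕ)) • hs 0) (F k.castSucc))
      (δ / 2) (by positivity) key (fun i => hs i.succ) hbound x
    rw [Fin.foldl_succ]
    simp only [Fin.val_succ] at *
    simpa [Nat.succ_sub_succ] using main

/-- If `∑_{k=0}^n a_k f(x + k y) = 0` for all `x` and all `‖y‖ < δ`, then
`a₀ · Δ_{h_n} Δ_{2 h_{n-1}} ⋯ Δ_{n h_1} f = 0` whenever `‖h_i‖ < δ / 2^n`. -/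
theorem a0_iterated_difference_eq_zero
    (d n : ℕ) (hd : 1 ≤ d) (hn : 1 ≤ n)
    (f : EuclideanSpace ℝ (Fin d) → ℂ)
    (δ : ℝ) (hδ : 0 < δ) (a : Fin (n + 1) → ℂ)
    (heq : ∀ y : EuclideanSpace ℝ (Fin d), ‖y‖ < δ →
      ∀ x : EuclideanSpace ℝ (Fin d),
        ∑ k : Fin (n + 1), a k * f (x + (k : ℕ) • y) = 0) :
    ∀ hs : Fin n → EuclideanSpace ℝ (Fin d),
      (∀ i, ‖hs i‖ < δ / 2 ^ n) →
      ∀ x : EuclideanSpace ℝ (Fin d),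
        a 0 * (Fin.foldl n (fun g k => deltaOp ((n - (k : ℕ)) • hs k) g) f) x = 0 := by
  intro hs hhs x
  exact aux_iterated n a (fun _ => f) δ hδ heq hs hhs x
end
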